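/- The pair u(x,t) = 4tx/(t²+x⁴), w(x,t) = 2x²(x⁴−5t²)/(t²+x⁴)² satisfies the Kaup–Boussinesq system u_t + w_x + (3/2) u u_x = 0, w_t − (1/4) u_{xxx} + (1/2) u w_x + w u_x = 0, at every point (x,t) ∈ ℝ² with (x,t) ≠ (0,0). -/

import Mathlib

/-!
Off the origin the common denominator t² + x⁴ is nonzero, so every derivative in the system is
given by the quotient rule, and both equations become identities between rational functions.
The third x-derivative is an iterated derivative, which needs the derivative of u(·, t) on all
of ℝ: for t ≠ 0 the denominator never vanishes, and for t = 0 u(·, 0) is identically zero.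
-/

noncomputable def u13 (x t : ℝ) : ℝ := 4 * t * x / (t ^ 2 + x ^ 4)

noncomputable def w13 (x t : ℝ) : ℝ := 2 * x ^ 2 * (x ^ 4 - 5 * t ^ 2) / (t ^ 2 + x ^ 4) ^ 2

noncomputable def u13_x (x t : ℝ) : ℝ := (4 * t ^ 3 - 12 * x ^ 4 * t) / (t ^ 2 + x ^ 4) ^ 2

noncomputable def u13_xx (x t : ℝ) : ℝ :=
  (48 * x ^ 7 * t - 80 * x ^ 3 * t ^ 3) / (t ^ 2 + x ^ 4) ^ 3

noncomputable def u13_xxx (x t : ℝ) : ℝ :=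
  (-240 * x ^ 2 * t ^ 5 + 1056 * x ^ 6 * t ^ 3 - 240 * x ^ 10 * t) / (t ^ 2 + x ^ 4) ^ 4

lemma sq_add_pow_four_ne_zero {x t : ℝ} (h : (x, t) ≠ (0, 0)) : t ^ 2 + x ^ 4 ≠ 0 := by
  intro h0
  obtain ⟨ht, hx⟩ := (add_eq_zero_iff_of_nonneg (sq_nonneg t) (by positivity)).1 h0
  exact h (by simp [pow_eq_zero_iff (n := 2) two_ne_zero |>.1 ht,
    pow_eq_zero_iff (n := 4) four_ne_zero |>.1 hx])

section Derivatives

variable {x t : ℝ} (hq : t ^ 2 + x ^ 4 ≠ 0)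
include hq

lemma hasDerivAt_u13_in_t :
    HasDerivAt (fun s => u13 x s) ((4 * x ^ 5 - 4 * x * t ^ 2) / (t ^ 2 + x ^ 4) ^ 2) t := by
  unfold u13
  refine (((hasDerivAt_id' t).const_mul 4).mul_const x).fun_div
    ((hasDerivAt_pow 2 t).add_const (x ^ 4)) hq |>.congr_deriv ?_
  field_simp
  ring

lemma hasDerivAt_w13_in_t :
    HasDerivAt (fun s => w13 x s)
      ((20 * x ^ 2 * t ^ 3 - 28 * x ^ 6 * t) / (t ^ 2 + x ^ 4) ^ 3) t := by
  unfold w13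
  refine ((((hasDerivAt_pow 2 t).const_mul 5).const_sub (x ^ 4)).const_mul (2 * x ^ 2)).fun_div
    (((hasDerivAt_pow 2 t).add_const (x ^ 4)).fun_pow 2) (pow_ne_zero 2 hq) |>.congr_deriv ?_
  field_simp
  ring

lemma hasDerivAt_w13_in_x :
    HasDerivAt (fun y => w13 y t)
      ((-20 * x * t ^ 4 + 72 * x ^ 5 * t ^ 2 - 4 * x ^ 9) / (t ^ 2 + x ^ 4) ^ 3) x := by
  unfold w13
  refine (((hasDerivAt_pow 2 x).const_mul 2).fun_mul
    ((hasDerivAt_pow 4 x).sub_const (5 * t ^ 2))).fun_div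
    (((hasDerivAt_pow 4 x).const_add (t ^ 2)).fun_pow 2) (pow_ne_zero 2 hq) |>.congr_deriv ?_
  field_simp
  ring

lemma hasDerivAt_u13_in_x : HasDerivAt (fun y => u13 y t) (u13_x x t) x := by
  unfold u13 u13_x
  refine ((hasDerivAt_id' x).const_mul (4 * t)).fun_div
    ((hasDerivAt_pow 4 x).const_add (t ^ 2)) hq |>.congr_deriv ?_
  field_simp
  ring

lemma hasDerivAt_u13_x_in_x : HasDerivAt (fun y => u13_x y t) (u13_xx x t) x := by
  unfold u13_x u13_xx
  refine ((((hasDerivAt_pow 4 x).const_mul 12).mul_const t).const_sub (4 * t ^ 3)).fun_div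
    (((hasDerivAt_pow 4 x).const_add (t ^ 2)).fun_pow 2) (pow_ne_zero 2 hq) |>.congr_deriv ?_
  field_simp
  ring

lemma hasDerivAt_u13_xx_in_x : HasDerivAt (fun y => u13_xx y t) (u13_xxx x t) x := by
  unfold u13_xx u13_xxx
  refine ((((hasDerivAt_pow 7 x).const_mul 48).mul_const t).fun_sub
    (((hasDerivAt_pow 3 x).const_mul 80).mul_const (t ^ 3))).fun_div
    (((hasDerivAt_pow 4 x).const_add (t ^ 2)).fun_pow 3) (pow_ne_zero 3 hq) |>.congr_deriv ?_
  field_simp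
  ring

end Derivatives

lemma iteratedDeriv_three_u13 (x t : ℝ) :
    iteratedDeriv 3 (fun y => u13 y t) x = u13_xxx x t := by
  rcases eq_or_ne t 0 with rfl | ht
  · simp [u13, u13_xxx]
  have hq (y : ℝ) : t ^ 2 + y ^ 4 ≠ 0 := by positivity
  have hx : deriv (fun y => u13 y t) = fun y => u13_x y t :=
    funext fun y => (hasDerivAt_u13_in_x (hq y)).deriv
  have hxx : deriv (fun y => u13_x y t) = fun y => u13_xx y t :=
    funext fun y => (hasDerivAt_u13_x_in_x (hq y)).deriv
  rw [iteratedDeriv_eq_iterate]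
  simp only [Function.iterate_succ_apply, Function.iterate_zero_apply, hx, hxx]
  exact (hasDerivAt_u13_xx_in_x (hq x)).deriv

theorem stmt13 (x t : ℝ) (h : (x, t) ≠ (0, 0)) :
    deriv (fun t' => u13 x t') t + deriv (fun x' => w13 x' t) x
        + (3 / 2) * u13 x t * deriv (fun x' => u13 x' t) x = 0 ∧
    deriv (fun t' => w13 x t') t - (1 / 4) * iteratedDeriv 3 (fun x' => u13 x' t) x
        + (1 / 2) * u13 x t * deriv (fun x' => w13 x' t) x
        + w13 x t * deriv (fun x' => u13 x' t) x = 0 := by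
  have hq := sq_add_pow_four_ne_zero h
  rw [(hasDerivAt_u13_in_t hq).deriv, (hasDerivAt_u13_in_x hq).deriv,
    (hasDerivAt_w13_in_t hq).deriv, (hasDerivAt_w13_in_x hq).deriv, iteratedDeriv_three_u13]
  unfold u13 w13 u13_x u13_xxx
  constructor <;> field_simp <;> ring
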